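/- With the same intervalization of ℝ by Y₁ < ... < Yₘ and r = 1, c ∈ (0,1), the domination number of the PICD equals k₃ + k₄, where k₃ = #{i ∈ {0,m} : nᵢ > 0} and k₄ = Σ_{i=1}^{m-1} [1(some X point lies in (Yᵢ, Mᵢ)) + 1(some X point lies in (Mᵢ, Yᵢ₊₁))], with Mᵢ = Yᵢ + c(Yᵢ₊₁ - Yᵢ). -/

import Mathlib

open Set
open scoped Classical

/-- The parameterized proximity region for the intervalization of `ℝ` by the points
`Y 0 < Y 1 < … < Y (m-1)`. -/
noncomputable def NM {m : ℕ} (Y : Fin m → ℝ) (r c x : ℝ) : Set ℝ :=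
  if x ∈ Set.range Y then {x}
  else if hB : (Finset.univ.filter fun i => Y i < x).Nonempty then
    (let l := (Finset.univ.filter fun i => Y i < x).sup' hB Y
     if hA : (Finset.univ.filter fun i => x < Y i).Nonempty then
       let u := (Finset.univ.filter fun i => x < Y i).inf' hA Y
       if x < l + c * (u - l) then Set.Ioo l (min u (l + r * (x - l)))
       else Set.Ioo (max l (u - r * (u - x))) u
     else Set.Ioo l (l + r * (x - l)))
  else if hA : (Finset.univ.filter fun i => x < Y i).Nonempty then
    let u := (Finset.univ.filter fun i => x < Y i).inf' hA Y
    Set.Ioo (u - r * (u - x)) u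
  else ∅

/-- The domination number of the digraph on vertices `X 0, …, X (n-1)` where `u` dominates
itself and every vertex lying in `N u`. -/
noncomputable def domNum (n : ℕ) (X : Fin n → ℝ) (N : ℝ → Set ℝ) : ℕ :=
  sInf {k | ∃ S : Finset (Fin n), S.card = k ∧
    ∀ j, ∃ i ∈ S, X j = X i ∨ X j ∈ N (X i)}

/-! For `r = 1` the proximity region of a point `x` is `(x, Y₀)` left of `Y₀`, `(Yₘ, x)`
right of `Yₘ`, and, inside a middle interval `(Yᵢ, Yᵢ₊₁)`, `(Yᵢ, x)` left of the centre `Mᵢ`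
and `(x, Yᵢ₊₁)` right of it. Hence the end intervals and the halves `(Yᵢ, Mᵢ)`, `(Mᵢ, Yᵢ₊₁)`
form a partition that no arc leaves, so a dominating set meets every occupied cell; and in each
occupied cell the sample point farthest from the cell's endpoint in `Y` dominates the whole
cell. The domination number is therefore the number of occupied cells. -/

open Function

def Dominates {α : Type*} (N : α → Set α) (x y : α) : Prop :=
  y = x ∨ y ∈ N x

def IsDominating {n : ℕ} (X : Fin n → ℝ) (N : ℝ → Set ℝ) (S : Finset (Fin n)) : Prop :=
  ∀ j, ∃ i ∈ S, Dominates N (X i) (X j)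

section Domination

variable {n : ℕ} {X : Fin n → ℝ} {N : ℝ → Set ℝ}

theorem domNum_le {S : Finset (Fin n)} (hS : IsDominating X N S) : domNum n X N ≤ S.card :=
  Nat.sInf_le ⟨S, rfl, hS⟩

theorem le_domNum {k : ℕ} (h : ∀ S, IsDominating X N S → k ≤ S.card) : k ≤ domNum n X N :=
  le_csInf ⟨_, Finset.univ, rfl, fun j => ⟨j, Finset.mem_univ j, Or.inl rfl⟩⟩
    (by rintro _ ⟨S, rfl, hS⟩; exact h S hS)

theorem domNum_eq_card_of_partition {κ : Type*} [Fintype κ] (P : κ → Set ℝ)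
    (hdisj : Pairwise (Disjoint on P)) (hcover : ∀ j, ∃ C, X j ∈ P C)
    (hN : ∀ C, ∀ x ∈ P C, N x ⊆ P C)
    (hdom : ∀ C, (∃ j, X j ∈ P C) →
      ∃ i, X i ∈ P C ∧ ∀ j, X j ∈ P C → Dominates N (X i) (X j)) :
    domNum n X N = (Finset.univ.filter fun C => ∃ j, X j ∈ P C).card := by
  set T := Finset.univ.filter fun C => ∃ j, X j ∈ P C
  choose cell hcell using hcover
  have cell_mem_T : ∀ j, cell j ∈ T := fun j => by simpa [T] using ⟨j, hcell j⟩
  apply le_antisymm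
  · have hrep : ∀ C : T, ∃ i, X i ∈ P C ∧ ∀ j, X j ∈ P C → Dominates N (X i) (X j) :=
      fun C => hdom C (Finset.mem_filter.1 C.2).2
    choose rep _ hrep using hrep
    calc domNum n X N ≤ (Finset.univ.image rep).card :=
          domNum_le fun j => ⟨rep ⟨cell j, cell_mem_T j⟩, Finset.mem_image_of_mem _ (by simp),
            hrep _ j (hcell j)⟩
      _ ≤ T.card := Finset.card_image_le.trans (by simp)
  · refine le_domNum fun S hS => Finset.card_le_card_of_surjOn cell fun C hC => ?_
    obtain ⟨j, hj⟩ : ∃ j, X j ∈ P C := by simpa [T] using hC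
    obtain ⟨i, hiS, hij⟩ := hS j
    have hj' : X j ∈ P (cell i) := by
      rcases hij with h | h
      · exact h ▸ hcell i
      · exact hN _ _ (hcell i) h
    exact ⟨i, hiS, hdisj.eq (Set.not_disjoint_iff.2 ⟨X j, hj', hj⟩)⟩

end Domination

theorem exists_dominator_of_lt_mem {α : Type*} [LinearOrder α] {n : ℕ} (X : Fin n → α)
    (N : α → Set α) {s : Set α} (hN : ∀ x ∈ s, ∀ y ∈ s, x < y → y ∈ N x)
    (hs : ∃ j, X j ∈ s) :
    ∃ i, X i ∈ s ∧ ∀ j, X j ∈ s → Dominates N (X i) (X j) := by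
  obtain ⟨j, hj⟩ := hs
  obtain ⟨i, hi, hmin⟩ := (Finset.univ.filter fun j => X j ∈ s).exists_min_image X
    ⟨j, by simpa using hj⟩
  replace hi : X i ∈ s := by simpa using hi
  refine ⟨i, hi, fun k hk => ?_⟩
  rcases (hmin k (by simpa using hk)).eq_or_lt with h | h
  · exact Or.inl h.symm
  · exact Or.inr (hN _ hi _ hk h)

theorem exists_dominator_of_gt_mem {α : Type*} [LinearOrder α] {n : ℕ} (X : Fin n → α)
    (N : α → Set α) {s : Set α} (hN : ∀ x ∈ s, ∀ y ∈ s, y < x → y ∈ N x)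
    (hs : ∃ j, X j ∈ s) :
    ∃ i, X i ∈ s ∧ ∀ j, X j ∈ s → Dominates N (X i) (X j) :=
  exists_dominator_of_lt_mem (α := αᵒᵈ) X N hN hs

section Intervalization

variable {m : ℕ} {Y : Fin (m + 1) → ℝ} {c x : ℝ}

theorem sup'_filter_lt_eq {ι : Type*} [Fintype ι] [Preorder ι] {f : ι → ℝ} (hf : Monotone f)
    {k : ι} (hk : f k < x) (hmax : ∀ k', f k' < x → k' ≤ k)
    (hB : (Finset.univ.filter fun k => f k < x).Nonempty) :
    (Finset.univ.filter fun k => f k < x).sup' hB f = f k :=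
  le_antisymm (Finset.sup'_le _ _ fun k' hk' => hf (hmax k' (by simpa using hk')))
    (Finset.le_sup' _ (by simpa using hk))

theorem inf'_filter_gt_eq {ι : Type*} [Fintype ι] [Preorder ι] {f : ι → ℝ} (hf : Monotone f)
    {k : ι} (hk : x < f k) (hmin : ∀ k', x < f k' → k ≤ k')
    (hA : (Finset.univ.filter fun k => x < f k).Nonempty) :
    (Finset.univ.filter fun k => x < f k).inf' hA f = f k :=
  le_antisymm (Finset.inf'_le _ (by simpa using hk))
    (Finset.le_inf' _ _ fun k' hk' => hf (hmin k' (by simpa using hk')))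

def centre (Y : Fin (m + 1) → ℝ) (c : ℝ) (i : Fin m) : ℝ :=
  Y i.castSucc + c * (Y i.succ - Y i.castSucc)

theorem NM_one_of_lt_zero (hY : StrictMono Y) (hx : x < Y 0) : NM Y 1 c x = Ioo x (Y 0) := by
  have above : ∀ k, x < Y k := fun k => hx.trans_le (hY.monotone (Fin.zero_le k))
  have hr : x ∉ range Y := fun ⟨k, hk⟩ => (above k).ne' hk
  have hB : ¬ (Finset.univ.filter fun k => Y k < x).Nonempty := by
    simpa using fun k => (above k).le
  have hA : (Finset.univ.filter fun k => x < Y k).Nonempty := ⟨0, by simpa using hx⟩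
  simp only [NM, if_neg hr, dif_neg hB, dif_pos hA,
    inf'_filter_gt_eq hY.monotone hx (fun k _ => Fin.zero_le k), one_mul, sub_sub_cancel]

theorem NM_one_of_last_lt (hY : StrictMono Y) (hx : Y (Fin.last m) < x) :
    NM Y 1 c x = Ioo (Y (Fin.last m)) x := by
  have below : ∀ k, Y k < x := fun k => (hY.monotone (Fin.le_last k)).trans_lt hx
  have hr : x ∉ range Y := fun ⟨k, hk⟩ => (below k).ne hk
  have hB : (Finset.univ.filter fun k => Y k < x).Nonempty := ⟨Fin.last m, by simpa using hx⟩
  have hA : ¬ (Finset.univ.filter fun k => x < Y k).Nonempty := by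
    simpa using fun k => (below k).le
  simp only [NM, if_neg hr, dif_pos hB, dif_neg hA,
    sup'_filter_lt_eq hY.monotone hx (fun k _ => Fin.le_last k), one_mul, add_sub_cancel]

theorem NM_one_of_mem_Ioo (hY : StrictMono Y) {i : Fin m}
    (hx : x ∈ Ioo (Y i.castSucc) (Y i.succ)) :
    NM Y 1 c x = if x < centre Y c i then
      Ioo (Y i.castSucc) x else Ioo x (Y i.succ) := by
  obtain ⟨h₁, h₂⟩ := hx
  have below : ∀ k, Y k < x → k ≤ i.castSucc := fun k h =>
    Fin.le_castSucc_iff.2 (hY.lt_iff_lt.1 (h.trans h₂))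
  have above : ∀ k, x < Y k → i.succ ≤ k := fun k h =>
    Fin.castSucc_lt_iff_succ_le.1 (hY.lt_iff_lt.1 (h₁.trans h))
  have hr : x ∉ range Y := by
    rintro ⟨k, rfl⟩
    rcases le_or_gt k i.castSucc with h | h
    · exact not_lt_of_ge (hY.monotone h) h₁
    · exact not_lt_of_ge (hY.monotone (Fin.castSucc_lt_iff_succ_le.1 h)) h₂
  have hB : (Finset.univ.filter fun k => Y k < x).Nonempty := ⟨i.castSucc, by simpa using h₁⟩
  have hA : (Finset.univ.filter fun k => x < Y k).Nonempty := ⟨i.succ, by simpa using h₂⟩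
  simp only [NM, if_neg hr, dif_pos hB, dif_pos hA, sup'_filter_lt_eq hY.monotone h₁ below,
    inf'_filter_gt_eq hY.monotone h₂ above, one_mul, add_sub_cancel, sub_sub_cancel,
    min_eq_right h₂.le, max_eq_right h₁.le]
  rfl

def cellSet (Y : Fin (m + 1) → ℝ) (c : ℝ) : Bool ⊕ Fin m × Bool → Set ℝ
  | .inl false => Iio (Y 0)
  | .inl true => Ioi (Y (Fin.last m))
  | .inr (i, false) => Ioo (Y i.castSucc) (centre Y c i)
  | .inr (i, true) => Ioo (centre Y c i) (Y i.succ)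

theorem centre_mem_Ioo (hY : StrictMono Y) (hc : c ∈ Ioo (0 : ℝ) 1) (i : Fin m) :
    centre Y c i ∈ Ioo (Y i.castSucc) (Y i.succ) := by
  have := hY (Fin.castSucc_lt_succ (i := i))
  constructor <;> unfold centre <;> nlinarith [hc.1, hc.2]

theorem cellSet_inr_subset (hY : StrictMono Y) (hc : c ∈ Ioo (0 : ℝ) 1) (i : Fin m) (b : Bool) :
    cellSet Y c (.inr (i, b)) ⊆ Ioo (Y i.castSucc) (Y i.succ) := by
  cases b
  · exact Ioo_subset_Ioo_right (centre_mem_Ioo hY hc i).2.le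
  · exact Ioo_subset_Ioo_left (centre_mem_Ioo hY hc i).1.le

theorem pairwise_disjoint_Ioo_castSucc_succ (hY : Monotone Y) :
    Pairwise (Disjoint on fun i : Fin m => Ioo (Y i.castSucc) (Y i.succ)) := by
  intro i i' hne
  wlog hlt : i < i' generalizing i i'
  · exact (this hne.symm (hne.symm.lt_of_le (not_lt.1 hlt))).symm
  exact Ioo_disjoint_Ioo.2 <| (min_le_left _ _).trans <|
    (hY (Fin.succ_le_castSucc_iff.2 hlt)).trans (le_max_right _ _)

theorem pairwise_disjoint_cellSet (hY : StrictMono Y) (hc : c ∈ Ioo (0 : ℝ) 1) :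
    Pairwise (Disjoint on cellSet Y c) := by
  have hmid : ∀ i b, cellSet Y c (.inr (i, b)) ⊆ Ioo (Y 0) (Y (Fin.last m)) := fun i b =>
    (cellSet_inr_subset hY hc i b).trans <|
      Ioo_subset_Ioo (hY.monotone (Fin.zero_le _)) (hY.monotone (Fin.le_last _))
  have hend : ∀ b i b', Disjoint (cellSet Y c (.inl b)) (cellSet Y c (.inr (i, b'))) := by
    intro b i b'
    refine Set.disjoint_of_subset_right (hmid i b') ?_
    cases b
    · exact (Iio_disjoint_Ici le_rfl).mono_right (Ioo_subset_Ioi_self.trans Ioi_subset_Ici_self)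
    · exact ((Iio_disjoint_Ici le_rfl).symm.mono_left Ioi_subset_Ici_self).mono_right
        Ioo_subset_Iio_self
  rintro (b | ⟨i, b⟩) (b' | ⟨i', b'⟩) hne
  · have h0 : Y 0 ≤ Y (Fin.last m) := hY.monotone (Fin.zero_le _)
    cases b <;> cases b' <;> simp only [ne_eq, not_true_eq_false] at hne
    · exact (Iio_disjoint_Ici h0).mono_right Ioi_subset_Ici_self
    · exact ((Iio_disjoint_Ici h0).mono_right Ioi_subset_Ici_self).symm
  · exact hend b i' b'
  · exact (hend b' i b).symm
  · by_cases hi : i = i'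
    · subst hi
      have halves : Disjoint (Ioo (Y i.castSucc) (centre Y c i)) (Ioo (centre Y c i) (Y i.succ)) :=
        Ioo_disjoint_Ioo.2 ((min_le_left _ _).trans (le_max_right _ _))
      cases b <;> cases b' <;> simp only [ne_eq, not_true_eq_false] at hne
      · exact halves
      · exact halves.symm
    · exact (pairwise_disjoint_Ioo_castSucc_succ hY.monotone hi).mono
        (cellSet_inr_subset hY hc i b) (cellSet_inr_subset hY hc i' b')

theorem exists_mem_Ioo_castSucc_succ (h₀ : Y 0 ≤ x) (hlast : x ≤ Y (Fin.last m))
    (hx : ∀ k, x ≠ Y k) : ∃ i : Fin m, x ∈ Ioo (Y i.castSucc) (Y i.succ) := by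
  obtain ⟨k, hk, hmax⟩ := (Finset.univ.filter fun k => Y k < x).exists_max_image id
    ⟨0, by simpa using h₀.lt_of_ne (hx 0).symm⟩
  simp only [Finset.mem_filter, Finset.mem_univ, true_and, id] at hk hmax
  have hk_last : k ≠ Fin.last m := by
    rintro rfl
    exact not_lt_of_ge hlast hk
  refine ⟨k.castPred hk_last, by simpa using hk, lt_of_not_ge fun h => ?_⟩
  have := hmax _ (h.lt_of_ne (hx _).symm)
  exact not_lt_of_ge this (by simpa using Fin.castSucc_lt_succ (i := k.castPred hk_last))

theorem exists_mem_cellSet (hx : ∀ k, x ≠ Y k)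
    (hxc : ∀ i, x ≠ centre Y c i) : ∃ C, x ∈ cellSet Y c C := by
  rcases lt_or_ge x (Y 0) with h₀ | h₀
  · exact ⟨.inl false, h₀⟩
  rcases lt_or_ge (Y (Fin.last m)) x with hlast | hlast
  · exact ⟨.inl true, hlast⟩
  obtain ⟨i, hi⟩ := exists_mem_Ioo_castSucc_succ h₀ hlast hx
  rcases (hxc i).lt_or_gt with h | h
  · exact ⟨.inr (i, false), hi.1, h⟩
  · exact ⟨.inr (i, true), h, hi.2⟩

theorem NM_one_subset_cellSet (hY : StrictMono Y) (hc : c ∈ Ioo (0 : ℝ) 1)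
    {C : Bool ⊕ Fin m × Bool} (hx : x ∈ cellSet Y c C) : NM Y 1 c x ⊆ cellSet Y c C := by
  rcases C with (_ | _) | ⟨i, _ | _⟩
  · rw [NM_one_of_lt_zero hY hx]
    exact Ioo_subset_Iio_self
  · rw [NM_one_of_last_lt hY hx]
    exact Ioo_subset_Ioi_self
  · rw [NM_one_of_mem_Ioo hY (cellSet_inr_subset hY hc i false hx), if_pos hx.2]
    exact Ioo_subset_Ioo_right hx.2.le
  · rw [NM_one_of_mem_Ioo hY (cellSet_inr_subset hY hc i true hx), if_neg (not_lt_of_gt hx.1)]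
    exact Ioo_subset_Ioo_left hx.1.le

theorem exists_dominator_cellSet (hY : StrictMono Y) (hc : c ∈ Ioo (0 : ℝ) 1) {n : ℕ}
    (X : Fin n → ℝ) (C : Bool ⊕ Fin m × Bool) (hC : ∃ j, X j ∈ cellSet Y c C) :
    ∃ i, X i ∈ cellSet Y c C ∧
      ∀ j, X j ∈ cellSet Y c C → Dominates (NM Y 1 c) (X i) (X j) := by
  rcases C with (_ | _) | ⟨i, _ | _⟩
  · refine exists_dominator_of_lt_mem X _ (fun x hx y hy hxy => ?_) hC
    rw [NM_one_of_lt_zero hY hx]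
    exact ⟨hxy, hy⟩
  · refine exists_dominator_of_gt_mem X _ (fun x hx y hy hxy => ?_) hC
    rw [NM_one_of_last_lt hY hx]
    exact ⟨hy, hxy⟩
  · refine exists_dominator_of_gt_mem X _ (fun x hx y hy hxy => ?_) hC
    rw [NM_one_of_mem_Ioo hY (cellSet_inr_subset hY hc i false hx), if_pos hx.2]
    exact ⟨hy.1, hxy⟩
  · refine exists_dominator_of_lt_mem X _ (fun x hx y hy hxy => ?_) hC
    rw [NM_one_of_mem_Ioo hY (cellSet_inr_subset hY hc i true hx), if_neg (not_lt_of_gt hx.1)]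
    exact ⟨hxy, hy.2⟩

theorem card_filter_exists_mem_cellSet {n : ℕ} (X : Fin n → ℝ) :
    (Finset.univ.filter fun C => ∃ j, X j ∈ cellSet Y c C).card =
      ((if ∃ j, X j < Y 0 then 1 else 0) + (if ∃ j, Y (Fin.last m) < X j then 1 else 0)) +
      ∑ i : Fin m, ((if ∃ j, X j ∈ Ioo (Y i.castSucc) (centre Y c i) then 1 else 0) +
        (if ∃ j, X j ∈ Ioo (centre Y c i) (Y i.succ) then 1 else 0)) := by
  rw [Finset.card_filter, Fintype.sum_sum_type, Fintype.sum_bool, Fintype.sum_prod_type]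
  -- unfolding `cellSet` keeps the classical `Decidable` instances, hence the `split_ifs` below
  simp only [Fintype.sum_bool, cellSet, mem_Iio, mem_Ioi]
  rw [add_comm (ite _ _ _)]
  congr 1
  refine Finset.sum_congr rfl fun i _ => ?_
  rw [add_comm (ite _ _ _)]
  congr 1 <;> split_ifs <;> simp_all

end Intervalization

/-- For `r = 1` and `c ∈ (0,1)`, with the intervalization of `ℝ` by
`Y 0 < … < Y m` and `X` points avoiding the `Y` values and the centers
`Mᵢ = Yᵢ + c(Yᵢ₊₁ - Yᵢ)`, the domination number of the PICD equals `k₃ + k₄`, where `k₃`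
is the number of nonempty end intervals and `k₄` sums, over middle intervals, the
indicators that `(Yᵢ, Mᵢ)` resp. `(Mᵢ, Yᵢ₊₁)` contain a sample point. -/
theorem picd_domNum_multi_r_eq_one (m n : ℕ) (Y : Fin (m+1) → ℝ) (hY : StrictMono Y)
    (X : Fin n → ℝ) (hXY : ∀ i j, X i ≠ Y j) (c : ℝ) (hc : c ∈ Set.Ioo (0:ℝ) 1)
    (hXM : ∀ j (i : Fin m),
      X j ≠ Y i.castSucc + c * (Y i.succ - Y i.castSucc)) :
    let M : Fin m → ℝ := fun i => Y i.castSucc + c * (Y i.succ - Y i.castSucc)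
    let n₀ := (Finset.univ.filter fun j => X j < Y 0).card
    let nm := (Finset.univ.filter fun j => Y (Fin.last m) < X j).card
    let k₃ := (if 0 < n₀ then 1 else 0) + (if 0 < nm then 1 else 0)
    let k₄ := Finset.univ.sum fun i : Fin m =>
      (if ∃ j, X j ∈ Set.Ioo (Y i.castSucc) (M i) then 1 else 0) +
      (if ∃ j, X j ∈ Set.Ioo (M i) (Y i.succ) then 1 else 0)
    domNum n X (NM Y 1 c) = k₃ + k₄ := by
  intro M n₀ nm k₃ k₄
  rw [domNum_eq_card_of_partition (cellSet Y c) (pairwise_disjoint_cellSet hY hc)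
    (fun j => exists_mem_cellSet (hXY j) (hXM j)) (fun _ _ => NM_one_subset_cellSet hY hc)
    (exists_dominator_cellSet hY hc X), card_filter_exists_mem_cellSet]
  simp only [k₃, n₀, nm, Finset.card_pos, Finset.filter_nonempty_iff, Finset.mem_univ, true_and]
  rfl
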